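/- arXiv:1508.03416 — 2 statements merged into one kernel-verified Lean document; each statement's English description precedes it below -/
import Mathlib

section
/- Let I be a symmetric positive definite k×k real matrix, L a k×d real matrix of rank d, and R a k×(k-d) real matrix of rank k-d such that L^T R = 0 and the k×k matrix (L R) is nonsingular. Then L(L^T I L)^{-1} L^T = I^{-1} - I^{-1} R (R^T I^{-1} R)^{-1} R^T I^{-1}. -/
/-!
Both sides `X` satisfy `X * (I * L) = L` and `X * R = 0`. Since `Lᵀ * I * L` is positive
definite and `Lᵀ * R = 0`, the columns of `I * L` together with those of `R` are `k`
independent vectors, hence a basis of `ℝᵏ`, and a matrix is determined by its values on a basis.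
-/

open Matrix

namespace Matrix

variable {K : Type*} [Field K] {l m n : Type*} [Fintype n]

theorem mulVec_injective_of_rank_eq_card {A : Matrix m n K} (h : A.rank = Fintype.card n) :
    Function.Injective A.mulVec := by
  rw [mulVec_injective_iff, linearIndependent_iff_card_eq_finrank_span, Set.finrank,
    ← rank_eq_finrank_span_cols, h]

theorem mulVec_surjective_of_injective [Fintype m] {A : Matrix m n K}
    (hcard : Fintype.card n = Fintype.card m) (hA : Function.Injective A.mulVec) :
    Function.Surjective A.mulVec := by
  rw [← coe_mulVecLin] at hA ⊢
  exact (LinearMap.injective_iff_surjective_of_finrank_eq_finrank (by simpa using hcard)).mp hA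

theorem eq_of_mul_eq_mul_of_mulVec_surjective [Fintype m] {X Y : Matrix l m K}
    {N : Matrix m n K} (hN : Function.Surjective N.mulVec) (h : X * N = Y * N) : X = Y := by
  refine ext_iff_mulVec.mpr fun w => ?_
  obtain ⟨v, rfl⟩ := hN w
  rw [mulVec_mulVec, mulVec_mulVec, h]

theorem fromCols_mulVec_injective [Fintype m] {p q : Type*} [Fintype p] [Fintype q]
    {A L : Matrix m p K} {R : Matrix m q K} (hLR : Lᵀ * R = 0)
    (hA : Function.Injective (Lᵀ * A).mulVec) (hR : Function.Injective R.mulVec) :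
    Function.Injective (fromCols A R).mulVec := by
  rw [← coe_mulVecLin, ← LinearMap.ker_eq_bot, LinearMap.ker_eq_bot']
  intro v hv
  rw [mulVecLin_apply, ← Sum.elim_comp_inl_inr v, fromCols_mulVec_sumElim] at hv
  have ha : v ∘ Sum.inl = 0 := hA <| by
    simpa [mulVec_add, mulVec_mulVec, hLR] using congrArg (Lᵀ *ᵥ ·) hv
  have hb : v ∘ Sum.inr = 0 := hR (by simpa [ha] using hv)
  rw [← Sum.elim_comp_inl_inr v, ha, hb]
  ext (i | i) <;> rfl

end Matrix

theorem stmt0_general {k d : ℕ} (I : Matrix (Fin k) (Fin k) ℝ)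
    (hI : I.PosDef)
    (L : Matrix (Fin k) (Fin d) ℝ) (R : Matrix (Fin k) (Fin (k - d)) ℝ)
    (hL : L.rank = d) (hR : R.rank = k - d)
    (hLR : Lᵀ * R = 0) :
    L * (Lᵀ * I * L)⁻¹ * Lᵀ = I⁻¹ - I⁻¹ * R * (Rᵀ * I⁻¹ * R)⁻¹ * Rᵀ * I⁻¹ := by
  have hdk : d ≤ k := hL ▸ L.rank_le_height
  have hLinj : Function.Injective L.mulVec := mulVec_injective_of_rank_eq_card (by simpa using hL)
  have hRinj : Function.Injective R.mulVec := mulVec_injective_of_rank_eq_card (by simpa using hR)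
  have hLIL : (Lᵀ * I * L).PosDef := by simpa using hI.conjTranspose_mul_mul_same hLinj
  have hRIR : (Rᵀ * I⁻¹ * R).PosDef := by simpa using hI.inv.conjTranspose_mul_mul_same hRinj
  have hRL : Rᵀ * L = 0 := by rw [← transpose_transpose L, ← transpose_mul, hLR, transpose_zero]
  have hbasis : Function.Surjective (fromCols (I * L) R).mulVec := by
    refine mulVec_surjective_of_injective (by simp [hdk]) (fromCols_mulVec_injective hLR ?_ hRinj)
    simpa only [Matrix.mul_assoc] using mulVec_injective_of_isUnit hLIL.isUnit
  have hP_IL : L * (Lᵀ * I * L)⁻¹ * Lᵀ * (I * L) = L := by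
    rw [Matrix.mul_assoc, ← Matrix.mul_assoc Lᵀ,
      nonsing_inv_mul_cancel_right _ _ hLIL.det_pos.ne'.isUnit]
  have hP_R : L * (Lᵀ * I * L)⁻¹ * Lᵀ * R = 0 := by rw [Matrix.mul_assoc, hLR, Matrix.mul_zero]
  have hQ_IL : (I⁻¹ - I⁻¹ * R * (Rᵀ * I⁻¹ * R)⁻¹ * Rᵀ * I⁻¹) * (I * L) = L := by
    rw [Matrix.sub_mul, Matrix.mul_assoc, nonsing_inv_mul_cancel_left _ _ hI.det_pos.ne'.isUnit,
      Matrix.mul_assoc, hRL, Matrix.mul_zero, sub_zero]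
  have hQ_R : (I⁻¹ - I⁻¹ * R * (Rᵀ * I⁻¹ * R)⁻¹ * Rᵀ * I⁻¹) * R = 0 := by
    simp only [Matrix.sub_mul, Matrix.mul_assoc]
    rw [← Matrix.mul_assoc Rᵀ, nonsing_inv_mul _ hRIR.det_pos.ne'.isUnit, Matrix.mul_one,
      sub_self]
  refine eq_of_mul_eq_mul_of_mulVec_surjective hbasis ?_
  rw [mul_fromCols, mul_fromCols, hP_IL, hP_R, hQ_IL, hQ_R]

/-- For symmetric positive definite `I`, full column rank `L` and `R`
with orthogonal column spaces such that `(L R)` is nonsingular,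
`L(LᵀIL)⁻¹Lᵀ = I⁻¹ - I⁻¹R(RᵀI⁻¹R)⁻¹RᵀI⁻¹`. -/
theorem stmt0 {k d : ℕ} (I : Matrix (Fin k) (Fin k) ℝ)
    (hI : I.PosDef) (hIsym : I.IsSymm)
    (L : Matrix (Fin k) (Fin d) ℝ) (R : Matrix (Fin k) (Fin (k - d)) ℝ)
    (hL : L.rank = d) (hR : R.rank = k - d)
    (hLR : Lᵀ * R = 0)
    (hfull : (Matrix.fromCols L R).rank = k) :
    L * (Lᵀ * I * L)⁻¹ * Lᵀ = I⁻¹ - I⁻¹ * R * (Rᵀ * I⁻¹ * R)⁻¹ * Rᵀ * I⁻¹ :=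
  stmt0_general I hI L R hL hR hLR
end

section
/- For ρ ∈ (−1/3, 1), with f(ρ) = (ρ, ρ, ρ, ρ, ρ², ρ²)^T so that ḟ(ρ) = (1,1,1,1,2ρ,2ρ)^T, and I(ρ) the 6×6 matrix (1/2)(1−ρ²)^{−4} with the entries given by the circular Gaussian copula Fisher information (rows/columns indexed by (12),(14),(23),(34),(13),(24): diagonal entries ρ⁴+2 for the first four and 2(ρ⁶+ρ⁴+1)/(ρ⁴+1) for the last two, off-diagonal entries 3ρ², ρ⁴+2ρ², −(ρ³+2ρ), 2(ρ⁶+2ρ²)/(ρ⁴+1) as in the stated pattern), one has ḟ(ρ)^T I(ρ) ḟ(ρ) = 4(1−ρ²)^{−2}; equivalently the asymptotic lower bound [ḟ(ρ)^T I(ρ) ḟ(ρ)]^{-1} = (1/4)(1−ρ²)². -/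
/-!
Contracting `A(ρ)` with `ḟ(ρ)` on one side gives `2(1 − ρ²)(1 + ρ², 1 + ρ², 1 + ρ², 1 + ρ², −2ρ, −2ρ)`,
since the last two columns combine as `2(ρ⁶ + ρ⁴ + 1) + 2(ρ⁶ + 2ρ²) = 2(ρ⁴ + 1)(2ρ² + 1)`.
Contracting again gives `ḟᵀ A ḟ = 2(1 − ρ²) · 4(1 − ρ²) = 8(1 − ρ²)²`, and the scalar
`(1/2)(1 − ρ²)⁻⁴` turns this into `4(1 − ρ²)⁻²`.
-/

open Matrix

namespace CircularCopula

noncomputable def fisherNumerator (ρ : ℝ) : Matrix (Fin 6) (Fin 6) ℝ :=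
  !![ρ^4+2, 3*ρ^2, 3*ρ^2, ρ^4+2*ρ^2, -(ρ^3+2*ρ), -(ρ^3+2*ρ);
     3*ρ^2, ρ^4+2, ρ^4+2*ρ^2, 3*ρ^2, -(ρ^3+2*ρ), -(ρ^3+2*ρ);
     3*ρ^2, ρ^4+2*ρ^2, ρ^4+2, 3*ρ^2, -(ρ^3+2*ρ), -(ρ^3+2*ρ);
     ρ^4+2*ρ^2, 3*ρ^2, 3*ρ^2, ρ^4+2, -(ρ^3+2*ρ), -(ρ^3+2*ρ);
     -(ρ^3+2*ρ), -(ρ^3+2*ρ), -(ρ^3+2*ρ), -(ρ^3+2*ρ),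
       2*(ρ^6+ρ^4+1)/(ρ^4+1), 2*(ρ^6+2*ρ^2)/(ρ^4+1);
     -(ρ^3+2*ρ), -(ρ^3+2*ρ), -(ρ^3+2*ρ), -(ρ^3+2*ρ),
       2*(ρ^6+2*ρ^2)/(ρ^4+1), 2*(ρ^6+ρ^4+1)/(ρ^4+1)]

def fdot (ρ : ℝ) : Fin 6 → ℝ := ![1, 1, 1, 1, 2*ρ, 2*ρ]

theorem fdot_vecMul_fisherNumerator (ρ : ℝ) :
    fdot ρ ᵥ* fisherNumerator ρ =
      (2 * (1 - ρ^2)) • ![1 + ρ^2, 1 + ρ^2, 1 + ρ^2, 1 + ρ^2, -2*ρ, -2*ρ] := by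
  have hρ4 : ρ^4 + 1 ≠ 0 := by positivity
  ext i
  fin_cases i <;>
    simp [fdot, fisherNumerator, vecMul, dotProduct, Fin.sum_univ_succ] <;>
    field_simp <;> ring

theorem fdot_dotProduct_fisherNumerator_mulVec (ρ : ℝ) :
    fdot ρ ⬝ᵥ (fisherNumerator ρ *ᵥ fdot ρ) = 8 * (1 - ρ^2)^2 := by
  rw [dotProduct_mulVec, fdot_vecMul_fisherNumerator, smul_dotProduct]
  simp only [fdot, cons_dotProduct, dotProduct_of_isEmpty, smul_eq_mul, head_cons, tail_cons]
  ring

theorem half_mul_inv_pow_four_mul_eight_mul_sq {K : Type*} [Field K] [CharZero K] (t : K) :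
    1 / 2 * (t^4)⁻¹ * (8 * t^2) = 4 * (t^2)⁻¹ := by
  rcases eq_or_ne t 0 with rfl | ht
  · simp
  · field_simp
    norm_num

end CircularCopula

theorem stmt9_general (ρ : ℝ) :
    let A : Matrix (Fin 6) (Fin 6) ℝ :=
      !![ρ^4+2, 3*ρ^2, 3*ρ^2, ρ^4+2*ρ^2, -(ρ^3+2*ρ), -(ρ^3+2*ρ);
         3*ρ^2, ρ^4+2, ρ^4+2*ρ^2, 3*ρ^2, -(ρ^3+2*ρ), -(ρ^3+2*ρ);
         3*ρ^2, ρ^4+2*ρ^2, ρ^4+2, 3*ρ^2, -(ρ^3+2*ρ), -(ρ^3+2*ρ);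
         ρ^4+2*ρ^2, 3*ρ^2, 3*ρ^2, ρ^4+2, -(ρ^3+2*ρ), -(ρ^3+2*ρ);
         -(ρ^3+2*ρ), -(ρ^3+2*ρ), -(ρ^3+2*ρ), -(ρ^3+2*ρ),
           2*(ρ^6+ρ^4+1)/(ρ^4+1), 2*(ρ^6+2*ρ^2)/(ρ^4+1);
         -(ρ^3+2*ρ), -(ρ^3+2*ρ), -(ρ^3+2*ρ), -(ρ^3+2*ρ),
           2*(ρ^6+2*ρ^2)/(ρ^4+1), 2*(ρ^6+ρ^4+1)/(ρ^4+1)]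
    let Imat : Matrix (Fin 6) (Fin 6) ℝ := (1 / 2 * ((1 - ρ^2)^4)⁻¹) • A
    let fdot : Fin 6 → ℝ := ![1, 1, 1, 1, 2*ρ, 2*ρ]
    fdot ⬝ᵥ (Imat *ᵥ fdot) = 4 * ((1 - ρ^2)^2)⁻¹ ∧
    (fdot ⬝ᵥ (Imat *ᵥ fdot))⁻¹ = 1 / 4 * (1 - ρ^2)^2 := by
  intro A Imat fdot
  have key : fdot ⬝ᵥ (Imat *ᵥ fdot) = 4 * ((1 - ρ^2)^2)⁻¹ := by
    change CircularCopula.fdot ρ ⬝ᵥ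
      (((1 / 2 * ((1 - ρ^2)^4)⁻¹) • CircularCopula.fisherNumerator ρ) *ᵥ CircularCopula.fdot ρ) = _
    rw [smul_mulVec, dotProduct_smul, CircularCopula.fdot_dotProduct_fisherNumerator_mulVec,
      smul_eq_mul, CircularCopula.half_mul_inv_pow_four_mul_eight_mul_sq]
  refine ⟨key, ?_⟩
  rw [key, mul_inv, inv_inv, one_div]

/-- For the four-dimensional circular Gaussian copula with
`f(ρ) = (ρ,ρ,ρ,ρ,ρ²,ρ²)ᵀ`, `ḟ(ρ) = (1,1,1,1,2ρ,2ρ)ᵀ` and Fisher information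
`I(ρ) = (1/2)(1−ρ²)⁻⁴ A(ρ)`, one has `ḟ(ρ)ᵀ I(ρ) ḟ(ρ) = 4(1−ρ²)⁻²`, i.e.
the asymptotic lower bound is `(1/4)(1−ρ²)²`. -/
theorem stmt9 (ρ : ℝ) (hρ : ρ ∈ Set.Ioo (-(1 / 3) : ℝ) 1) :
    let A : Matrix (Fin 6) (Fin 6) ℝ :=
      !![ρ^4+2, 3*ρ^2, 3*ρ^2, ρ^4+2*ρ^2, -(ρ^3+2*ρ), -(ρ^3+2*ρ);
         3*ρ^2, ρ^4+2, ρ^4+2*ρ^2, 3*ρ^2, -(ρ^3+2*ρ), -(ρ^3+2*ρ);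
         3*ρ^2, ρ^4+2*ρ^2, ρ^4+2, 3*ρ^2, -(ρ^3+2*ρ), -(ρ^3+2*ρ);
         ρ^4+2*ρ^2, 3*ρ^2, 3*ρ^2, ρ^4+2, -(ρ^3+2*ρ), -(ρ^3+2*ρ);
         -(ρ^3+2*ρ), -(ρ^3+2*ρ), -(ρ^3+2*ρ), -(ρ^3+2*ρ),
           2*(ρ^6+ρ^4+1)/(ρ^4+1), 2*(ρ^6+2*ρ^2)/(ρ^4+1);
         -(ρ^3+2*ρ), -(ρ^3+2*ρ), -(ρ^3+2*ρ), -(ρ^3+2*ρ),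
           2*(ρ^6+2*ρ^2)/(ρ^4+1), 2*(ρ^6+ρ^4+1)/(ρ^4+1)]
    let Imat : Matrix (Fin 6) (Fin 6) ℝ := (1 / 2 * ((1 - ρ^2)^4)⁻¹) • A
    let fdot : Fin 6 → ℝ := ![1, 1, 1, 1, 2*ρ, 2*ρ]
    fdot ⬝ᵥ (Imat *ᵥ fdot) = 4 * ((1 - ρ^2)^2)⁻¹ ∧
    (fdot ⬝ᵥ (Imat *ᵥ fdot))⁻¹ = 1 / 4 * (1 - ρ^2)^2 :=
  stmt9_general ρ
end
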